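/- arXiv:math/0505036 — 3 statements merged into one kernel-verified Lean document; each statement's English description precedes it below -/
import Mathlib

section
/- Fix an integer r ≥ 1 and let f(z) = z + z^{r+1} + z^{r+2} + z^{r+3} + ... as a formal power series, and let g(z) = z + r·z^{r+1} + r·z^{2r+1} + r·z^{3r+1} + .... Then for every integer m ≥ r, one has f(z)^m − z^m ≪ (1 + z + z^2 + ... + z^{r-1}) · (g(z)^m − z^m), where ≪ denotes coefficientwise inequality of formal power series with nonnegative coefficients. -/
open PowerSeries

/-- `g ≪ h`: every coefficient of `g` is at most the corresponding coefficient of `h`. -/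
def Dominated (g h : PowerSeries ℝ) : Prop :=
  ∀ k : ℕ, PowerSeries.coeff k g ≤ PowerSeries.coeff k h

namespace Stmt2Aux

/-- `J = 1 + X + X^2 + ⋯ = 1/(1-X)`. -/
noncomputable def J : PowerSeries ℝ := PowerSeries.mk fun _ => 1

/-- `Jr r = 1 + X^r + X^{2r} + ⋯ = 1/(1-X^r)`. -/
noncomputable def Jr (r : ℕ) : PowerSeries ℝ := PowerSeries.mk fun k => if r ∣ k then 1 else 0

/-- All coefficients are nonnegative. -/
def Nonneg (h : PowerSeries ℝ) : Prop := ∀ k : ℕ, 0 ≤ PowerSeries.coeff k h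

lemma Nonneg.add {a b : PowerSeries ℝ} (ha : Nonneg a) (hb : Nonneg b) : Nonneg (a + b) :=
  fun k => by rw [map_add]; exact add_nonneg (ha k) (hb k)

lemma Nonneg.mul {a b : PowerSeries ℝ} (ha : Nonneg a) (hb : Nonneg b) : Nonneg (a * b) :=
  fun k => by
    rw [PowerSeries.coeff_mul]
    exact Finset.sum_nonneg fun p _ => mul_nonneg (ha _) (hb _)

lemma Nonneg.sum {ι : Type*} {s : Finset ι} {h : ι → PowerSeries ℝ}
    (hh : ∀ i ∈ s, Nonneg (h i)) : Nonneg (∑ i ∈ s, h i) :=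
  fun k => by rw [map_sum]; exact Finset.sum_nonneg fun i hi => hh i hi k

lemma nonneg_one : Nonneg (1 : PowerSeries ℝ) := fun k => by
  rw [PowerSeries.coeff_one]; split_ifs <;> norm_num

lemma Nonneg.pow {a : PowerSeries ℝ} (ha : Nonneg a) (n : ℕ) : Nonneg (a ^ n) := by
  induction n with
  | zero => rw [pow_zero]; exact nonneg_one
  | succ n ih => rw [pow_succ]; exact ih.mul ha

lemma nonneg_J : Nonneg J := fun k => by simp [J]

lemma nonneg_Jr (r : ℕ) : Nonneg (Jr r) := fun k => by
  simp only [Jr, PowerSeries.coeff_mk]; split_ifs <;> norm_num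

lemma nonneg_X_pow (n : ℕ) : Nonneg ((PowerSeries.X : PowerSeries ℝ) ^ n) := fun k => by
  rw [PowerSeries.coeff_X_pow]; split_ifs <;> norm_num

lemma coeff_X_pow_mul_J (i n : ℕ) :
    PowerSeries.coeff n (PowerSeries.X ^ i * J) = if i ≤ n then 1 else 0 := by
  rw [mul_comm, PowerSeries.coeff_mul_X_pow']
  split_ifs <;> simp [J]

lemma one_sub_X_pow_mul_J (i : ℕ) :
    ((1 : PowerSeries ℝ) - PowerSeries.X ^ i) * J = ∑ k ∈ Finset.range i, PowerSeries.X ^ k := by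
  ext n
  rw [sub_mul, one_mul, map_sub, coeff_X_pow_mul_J, map_sum]
  simp only [PowerSeries.coeff_X_pow, J, PowerSeries.coeff_mk]
  rw [Finset.sum_ite_eq]
  simp only [Finset.mem_range]
  split_ifs <;> (try (exfalso; omega)) <;> norm_num

lemma P_mul_Jr (r : ℕ) (hr : 1 ≤ r) :
    (∑ i ∈ Finset.range r, (PowerSeries.X : PowerSeries ℝ) ^ i) * Jr r = J := by
  ext n
  rw [Finset.sum_mul, map_sum]
  have hco : ∀ i, PowerSeries.coeff n (PowerSeries.X ^ i * Jr r)
      = if i ≤ n ∧ r ∣ (n - i) then (1 : ℝ) else 0 := by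
    intro i
    rw [mul_comm, PowerSeries.coeff_mul_X_pow']
    simp only [Jr, PowerSeries.coeff_mk]
    split_ifs with h1 h2 h3 h4 <;> first | rfl | (exfalso; tauto)
  simp only [hco]
  rw [Finset.sum_eq_single_of_mem (n % r)
      (Finset.mem_range.2 (Nat.mod_lt n hr))]
  · rw [if_pos ⟨Nat.mod_le n r, Nat.dvd_sub_mod n⟩]
    simp [J]
  · intro i hi hne
    rw [if_neg]
    rintro ⟨h1, h2⟩
    apply hne
    obtain ⟨c, hc⟩ := h2
    have hn : n = i + r * c := by omega
    rw [hn, Nat.add_mul_mod_self_left, Nat.mod_eq_of_lt (Finset.mem_range.1 hi)]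

end Stmt2Aux

open Stmt2Aux

/-- with `f(z) = z + z^{r+1} + z^{r+2} + ⋯` and
`g(z) = z + r z^{r+1} + r z^{2r+1} + r z^{3r+1} + ⋯`, for every `m ≥ r` one has
`f(z)^m − z^m ≪ (1 + z + ⋯ + z^{r-1}) · (g(z)^m − z^m)`. -/
theorem stmt2 (r : ℕ) (hr : 1 ≤ r) (f g : PowerSeries ℝ)
    (hf : ∀ k : ℕ, PowerSeries.coeff k f =
      if k = 1 then 1 else if r + 1 ≤ k then 1 else 0)
    (hg : ∀ k : ℕ, PowerSeries.coeff k g =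
      if k = 1 then 1 else if r + 1 ≤ k ∧ k % r = 1 % r then (r : ℝ) else 0) :
    ∀ m : ℕ, r ≤ m →
      Dominated (f ^ m - PowerSeries.X ^ m)
        ((∑ i ∈ Finset.range r, PowerSeries.X ^ i) *
          (g ^ m - PowerSeries.X ^ m)) := by
  -- notation
  set P : PowerSeries ℝ := ∑ i ∈ Finset.range r, PowerSeries.X ^ i with hPdef
  have hPJr : P * Jr r = J := P_mul_Jr r hr
  -- closed forms for f and g
  have fId : f = PowerSeries.X + PowerSeries.X ^ (r + 1) * J := by
    ext n
    rw [hf n, map_add, PowerSeries.coeff_X, coeff_X_pow_mul_J]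
    split_ifs <;> (try (exfalso; omega)) <;> norm_num
  have key : ∀ n, r + 1 ≤ n → (r ∣ n - (r + 1) ↔ n % r = 1 % r) := by
    intro n hn
    constructor
    · rintro ⟨c, hc⟩
      have h1 : n = 1 + r * (c + 1) := by rw [Nat.mul_add, Nat.mul_one]; omega
      rw [h1, Nat.add_mul_mod_self_left]
    · intro h
      apply Nat.dvd_of_mod_eq_zero
      apply Nat.sub_mod_eq_zero_of_mod_eq
      rw [h, Nat.add_mod_left]
  have gId : g = PowerSeries.X + PowerSeries.C (r : ℝ) * (PowerSeries.X ^ (r + 1) * Jr r) := by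
    ext n
    rw [hg n, map_add, PowerSeries.coeff_X, PowerSeries.coeff_C_mul,
      mul_comm (PowerSeries.X ^ (r + 1)) (Jr r), PowerSeries.coeff_mul_X_pow']
    simp only [Jr, PowerSeries.coeff_mk]
    by_cases h1 : n = 1
    · rw [if_pos h1, if_pos h1, if_neg (by omega)]; ring
    · rw [if_neg h1, if_neg h1]
      by_cases h2 : r + 1 ≤ n
      · rw [if_pos h2]
        by_cases h3 : n % r = 1 % r
        · rw [if_pos ⟨h2, h3⟩, if_pos ((key n h2).2 h3)]; ring
        · rw [if_neg (by tauto), if_neg (fun hd => h3 ((key n h2).1 hd))]; ring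
      · rw [if_neg (by tauto), if_neg h2]; ring
  -- nonnegativity of f and g
  have hfnn : Nonneg f := fun k => by rw [hf k]; split_ifs <;> norm_num
  have hgnn : Nonneg g := fun k => by rw [hg k]; split_ifs <;> norm_num
  -- the key nonnegativity: J * (g - f) ≥ 0
  have hQ : Nonneg ((PowerSeries.C (r : ℝ) - P) * J) := by
    have hC : (PowerSeries.C (r : ℝ)) = ∑ _i ∈ Finset.range r, (1 : PowerSeries ℝ) := by
      rw [Finset.sum_const, Finset.card_range, nsmul_eq_mul, mul_one]
      exact map_natCast (PowerSeries.C (R := ℝ)) r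
    have hQ' : (PowerSeries.C (r : ℝ) - P) * J
        = ∑ i ∈ Finset.range r, ∑ k ∈ Finset.range i, (PowerSeries.X : PowerSeries ℝ) ^ k := by
      rw [hC, hPdef, ← Finset.sum_sub_distrib, Finset.sum_mul]
      exact Finset.sum_congr rfl fun i _ => one_sub_X_pow_mul_J i
    rw [hQ']
    exact Nonneg.sum fun i _ => Nonneg.sum fun k _ => nonneg_X_pow k
  have hW : J * (g - f)
      = PowerSeries.X ^ (r + 1) * (Jr r * ((PowerSeries.C (r : ℝ) - P) * J)) := by
    rw [gId, fId]
    rw [← hPJr]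
    ring
  have hWnn : Nonneg (J * (g - f)) := by
    rw [hW]
    exact (nonneg_X_pow _).mul ((nonneg_Jr r).mul hQ)
  -- cumulative-sum comparison of powers
  have hE : ∀ i : ℕ, Nonneg (J * (g ^ i - f ^ i)) := by
    intro i
    induction i with
    | zero =>
      intro k
      simp
    | succ i ih =>
      have hid : J * (g ^ (i + 1) - f ^ (i + 1))
          = g * (J * (g ^ i - f ^ i)) + (J * (g - f)) * f ^ i := by ring
      rw [hid]
      exact (hgnn.mul ih).add (hWnn.mul (hfnn.pow i))
  -- main computation
  intro m _hm k
  have hgeom_g : (∑ i ∈ Finset.range m, g ^ i * PowerSeries.X ^ (m - 1 - i))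
      * (g - PowerSeries.X) = g ^ m - PowerSeries.X ^ m := geom_sum₂_mul g PowerSeries.X m
  have hgeom_f : (∑ i ∈ Finset.range m, f ^ i * PowerSeries.X ^ (m - 1 - i))
      * (f - PowerSeries.X) = f ^ m - PowerSeries.X ^ m := geom_sum₂_mul f PowerSeries.X m
  have hgx : g - PowerSeries.X
      = PowerSeries.C (r : ℝ) * (PowerSeries.X ^ (r + 1) * Jr r) := by rw [gId]; ring
  have hfx : f - PowerSeries.X = PowerSeries.X ^ (r + 1) * J := by rw [fId]; ring
  have hsplit : ∑ i ∈ Finset.range m,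
        (J * (g ^ i - f ^ i)) * PowerSeries.X ^ (m - 1 - i)
      = J * (∑ i ∈ Finset.range m, g ^ i * PowerSeries.X ^ (m - 1 - i))
        - J * (∑ i ∈ Finset.range m, f ^ i * PowerSeries.X ^ (m - 1 - i)) := by
    rw [Finset.mul_sum, Finset.mul_sum, ← Finset.sum_sub_distrib]
    exact Finset.sum_congr rfl fun i _ => by ring
  have hDelta : P * (g ^ m - PowerSeries.X ^ m) - (f ^ m - PowerSeries.X ^ m)
      = PowerSeries.X ^ (r + 1) *
        ((PowerSeries.C (r : ℝ) - 1)
            * (J * (∑ i ∈ Finset.range m, g ^ i * PowerSeries.X ^ (m - 1 - i)))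
          + ∑ i ∈ Finset.range m,
              (J * (g ^ i - f ^ i)) * PowerSeries.X ^ (m - 1 - i)) := by
    rw [hsplit, ← hgeom_g, ← hgeom_f, hgx, hfx, ← hPJr]
    ring
  have hCr1 : Nonneg ((PowerSeries.C (r : ℝ) - 1) : PowerSeries ℝ) := by
    intro n
    rw [map_sub, PowerSeries.coeff_C, PowerSeries.coeff_one]
    have h1 : (1 : ℝ) ≤ (r : ℝ) := by exact_mod_cast hr
    split_ifs <;> norm_num <;> linarith
  have hSg : Nonneg (∑ i ∈ Finset.range m, g ^ i * PowerSeries.X ^ (m - 1 - i)) :=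
    Nonneg.sum fun i _ => (hgnn.pow i).mul (nonneg_X_pow _)
  have hnn : 0 ≤ PowerSeries.coeff k
      (P * (g ^ m - PowerSeries.X ^ m) - (f ^ m - PowerSeries.X ^ m)) := by
    rw [hDelta]
    exact ((nonneg_X_pow _).mul
      ((hCr1.mul (nonneg_J.mul hSg)).add
        (Nonneg.sum fun i _ => (hE i).mul (nonneg_X_pow _)))) k
  rw [map_sub] at hnn
  linarith
end

section
/- Fix an integer r ≥ 1 and let f(z) = z + z^{r+1} + z^{r+2} + ... as a formal power series. Write the n-th iterate as f^n(z) = z + a_r z^{r+1} + a_{r+1} z^{r+2} + a_{r+2} z^{r+3} + .... Then all coefficients a_k are nonnegative and satisfy a_k ≤ (2 r^3 n)^{k/r} for all k ≥ r. -/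
open PowerSeries

/-- Formal composition `f ∘ g` of power series (intended for `g` with zero
constant term), defined coefficientwise. -/
noncomputable def psComp (f g : PowerSeries ℝ) : PowerSeries ℝ :=
  PowerSeries.mk fun n => ∑ i ∈ Finset.range (n + 1),
    PowerSeries.coeff i f * PowerSeries.coeff n (g ^ i)

/-- The `n`-th iterate `f ∘ f ∘ ⋯ ∘ f` of a formal power series. -/
noncomputable def psIter (f : PowerSeries ℝ) : ℕ → PowerSeries ℝ
  | 0 => PowerSeries.X
  | n + 1 => psComp f (psIter f n)


open Finset




lemma coeff_mul_nonneg (a b : PowerSeries ℝ) (ha : ∀ k, 0 ≤ coeff k a)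
    (hb : ∀ k, 0 ≤ coeff k b) (k : ℕ) : 0 ≤ coeff k (a * b) := by
  rw [PowerSeries.coeff_mul]
  exact Finset.sum_nonneg fun p _ => mul_nonneg (ha _) (hb _)

lemma coeff_pow_nonneg (a : PowerSeries ℝ) (ha : ∀ k, 0 ≤ coeff k a) (i : ℕ) :
    ∀ k, 0 ≤ coeff k (a ^ i) := by
  induction i with
  | zero => intro k; rw [pow_zero, PowerSeries.coeff_one]; positivity
  | succ i ih => intro k; rw [pow_succ]; exact coeff_mul_nonneg _ _ ih ha k

noncomputable def psum (g : PowerSeries ℝ) (y : ℝ) (N : ℕ) : ℝ :=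
  ∑ m ∈ Finset.range (N + 1), coeff m g * y ^ m

lemma psum_nonneg {g : PowerSeries ℝ} {y : ℝ} (hg : ∀ k, 0 ≤ coeff k g)
    (hy : 0 ≤ y) (N : ℕ) : 0 ≤ psum g y N :=
  Finset.sum_nonneg fun m _ => mul_nonneg (hg m) (pow_nonneg hy m)

lemma psum_eq_eval_trunc (g : PowerSeries ℝ) (y : ℝ) (N : ℕ) :
    psum g y N = (PowerSeries.trunc (N + 1) g).eval y := by
  rw [Polynomial.eval_eq_sum_range' (PowerSeries.natDegree_trunc_lt g N) y, psum]
  refine Finset.sum_congr rfl fun m hm => ?_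
  rw [PowerSeries.coeff_trunc, if_pos (Finset.mem_range.mp hm)]

lemma psum_mul_le (a b : PowerSeries ℝ) {y : ℝ} (ha : ∀ k, 0 ≤ coeff k a)
    (hb : ∀ k, 0 ≤ coeff k b) (hy : 0 ≤ y) (N : ℕ) :
    psum (a * b) y N ≤ psum a y N * psum b y N := by
  rw [psum_eq_eval_trunc, psum_eq_eval_trunc, psum_eq_eval_trunc, ← Polynomial.eval_mul]
  have hPd : (PowerSeries.trunc (N + 1) (a * b)).natDegree < 2 * N + 2 := by
    have := PowerSeries.natDegree_trunc_lt (a * b) N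
    omega
  have hQd : (PowerSeries.trunc (N + 1) a * PowerSeries.trunc (N + 1) b).natDegree < 2 * N + 2 := by
    have h1 := PowerSeries.natDegree_trunc_lt a N
    have h2 := PowerSeries.natDegree_trunc_lt b N
    have := Polynomial.natDegree_mul_le (p := PowerSeries.trunc (N + 1) a)
      (q := PowerSeries.trunc (N + 1) b)
    omega
  rw [Polynomial.eval_eq_sum_range' hPd y, Polynomial.eval_eq_sum_range' hQd y]
  refine Finset.sum_le_sum fun j _ => ?_
  refine mul_le_mul_of_nonneg_right ?_ (pow_nonneg hy j)
  -- compare coefficients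
  rw [PowerSeries.coeff_trunc, Polynomial.coeff_mul]
  by_cases hj : j < N + 1
  · rw [if_pos hj, PowerSeries.coeff_mul]
    refine le_of_eq (Finset.sum_congr rfl fun pq hpq => ?_)
    have hmem := Finset.HasAntidiagonal.mem_antidiagonal.mp hpq
    rw [PowerSeries.coeff_trunc, PowerSeries.coeff_trunc, if_pos (by omega), if_pos (by omega)]
  · rw [if_neg hj]
    refine Finset.sum_nonneg fun pq _ => mul_nonneg ?_ ?_ <;>
      rw [PowerSeries.coeff_trunc] <;> split <;> first | exact ha _ | exact hb _ | rfl

variable {r : ℕ} {f : PowerSeries ℝ}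

lemma hf_nonneg (hf : ∀ k : ℕ, PowerSeries.coeff k f =
      if k = 1 then 1 else if r + 1 ≤ k then 1 else 0) (k : ℕ) :
    0 ≤ coeff k f := by
  rw [hf k]; split <;> [norm_num; skip]; split <;> norm_num

lemma psIter_nonneg (hf : ∀ k : ℕ, PowerSeries.coeff k f =
      if k = 1 then 1 else if r + 1 ≤ k then 1 else 0) (n : ℕ) :
    ∀ k, 0 ≤ coeff k (psIter f n) := by
  induction n with
  | zero =>
    intro k
    show 0 ≤ coeff k X
    rw [PowerSeries.coeff_X]; split <;> norm_num
  | succ n ih =>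
    intro k
    show 0 ≤ coeff k (psComp f (psIter f n))
    rw [psComp, PowerSeries.coeff_mk]
    exact Finset.sum_nonneg fun i _ =>
      mul_nonneg (hf_nonneg hf i) (coeff_pow_nonneg _ ih i k)

lemma psIter_coeff_one (hf : ∀ k : ℕ, PowerSeries.coeff k f =
      if k = 1 then 1 else if r + 1 ≤ k then 1 else 0) (hr : 1 ≤ r) (n : ℕ) :
    coeff 1 (psIter f n) = 1 := by
  induction n with
  | zero => exact PowerSeries.coeff_one_X
  | succ n ih =>
    show coeff 1 (psComp f (psIter f n)) = 1
    rw [psComp, PowerSeries.coeff_mk]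
    rw [Finset.sum_range_succ, Finset.sum_range_one]
    rw [hf 0, hf 1, pow_zero, pow_one, ih]
    simp only [PowerSeries.coeff_one]
    norm_num

noncomputable def Freal (r : ℕ) (x : ℝ) : ℝ := x + x ^ (r + 1) / (1 - x)

lemma geom_aux {V : ℝ} (h0 : 0 ≤ V) (h1 : V < 1) (M : ℕ) :
    ∑ j ∈ Finset.range M, V ^ j ≤ 1 / (1 - V) := by
  have h1' : (0:ℝ) < 1 - V := by linarith
  rw [le_div_iff₀ h1']
  have h := geom_sum_mul V M
  have hM : 0 ≤ V ^ M := pow_nonneg h0 M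
  nlinarith

lemma psum_pow_le {g : PowerSeries ℝ} {y V : ℝ} (hg : ∀ k, 0 ≤ coeff k g)
    (hy : 0 ≤ y) (N : ℕ) (hV : psum g y N ≤ V) (hV0 : 0 ≤ V) (i : ℕ) :
    psum (g ^ i) y N ≤ V ^ i := by
  induction i with
  | zero =>
    rw [pow_zero, pow_zero, psum]
    have : ∀ m ∈ Finset.range (N + 1), coeff m (1 : PowerSeries ℝ) * y ^ m
        = if m = 0 then 1 else 0 := by
      intro m _
      rw [PowerSeries.coeff_one]
      split <;> simp_all
    rw [Finset.sum_congr rfl this, Finset.sum_ite_eq' (Finset.range (N + 1)) 0 (fun _ => (1:ℝ))]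
    simp
  | succ i ih =>
    rw [pow_succ, pow_succ]
    calc psum (g ^ i * g) y N ≤ psum (g ^ i) y N * psum g y N :=
          psum_mul_le _ _ (coeff_pow_nonneg _ hg i) hg hy N
      _ ≤ V ^ i * V := by
          refine mul_le_mul ih hV (psum_nonneg hg hy N) (pow_nonneg hV0 i)

lemma bridge (hf : ∀ k : ℕ, PowerSeries.coeff k f =
      if k = 1 then 1 else if r + 1 ≤ k then 1 else 0) (hr : 1 ≤ r)
    {y : ℝ} (hy : 0 ≤ y) :
    ∀ n : ℕ, (∀ m, m < n → 0 ≤ (Freal r)^[m] y ∧ (Freal r)^[m] y < 1) →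
    ∀ N, psum (psIter f n) y N ≤ (Freal r)^[n] y := by
  intro n
  induction n with
  | zero =>
    intro _ N
    show psum X y N ≤ y
    rw [psum]
    have : ∀ m ∈ Finset.range (N + 1), coeff m (X : PowerSeries ℝ) * y ^ m
        = if m = 1 then y ^ m else 0 := by
      intro m _
      rw [PowerSeries.coeff_X]
      split <;> simp
    rw [Finset.sum_congr rfl this, Finset.sum_ite_eq' (Finset.range (N + 1)) 1 (fun m => y ^ m)]
    split <;> simpa using hy
  | succ n ih =>
    intro hinv N
    have hVle : psum (psIter f n) y N ≤ (Freal r)^[n] y :=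
      ih (fun m hm => hinv m (by omega)) N
    obtain ⟨hV0, hV1⟩ := hinv n (by omega)
    set V := (Freal r)^[n] y with hV
    set g := psIter f n with hg
    have hgnn : ∀ k, 0 ≤ coeff k g := psIter_nonneg hf n
    have step1 : psum (psIter f (n + 1)) y N ≤
        ∑ i ∈ Finset.range (N + 1), coeff i f * psum (g ^ i) y N := by
      show psum (psComp f g) y N ≤ _
      rw [psum]
      have expand : ∀ m ∈ Finset.range (N + 1),
          coeff m (psComp f g) * y ^ m
          = ∑ i ∈ Finset.range (m + 1), coeff i f * (coeff m (g ^ i) * y ^ m) := by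
        intro m _
        rw [psComp, PowerSeries.coeff_mk, Finset.sum_mul]
        exact Finset.sum_congr rfl fun i _ => by ring
      rw [Finset.sum_congr rfl expand]
      have extend : ∀ m ∈ Finset.range (N + 1),
          ∑ i ∈ Finset.range (m + 1), coeff i f * (coeff m (g ^ i) * y ^ m)
          ≤ ∑ i ∈ Finset.range (N + 1), coeff i f * (coeff m (g ^ i) * y ^ m) := by
        intro m hm
        refine Finset.sum_le_sum_of_subset_of_nonneg ?_ fun i _ _ => ?_
        · have := Finset.mem_range.mp hm
          exact Finset.range_subset_range.mpr (by omega)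
        · exact mul_nonneg (hf_nonneg hf i)
            (mul_nonneg (coeff_pow_nonneg _ hgnn i m) (pow_nonneg hy m))
      calc _ ≤ ∑ m ∈ Finset.range (N + 1), ∑ i ∈ Finset.range (N + 1),
            coeff i f * (coeff m (g ^ i) * y ^ m) := Finset.sum_le_sum extend
        _ = ∑ i ∈ Finset.range (N + 1), coeff i f * psum (g ^ i) y N := by
            rw [Finset.sum_comm]
            exact Finset.sum_congr rfl fun i _ => by rw [psum, Finset.mul_sum]
    have step2 : ∑ i ∈ Finset.range (N + 1), coeff i f * psum (g ^ i) y N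
        ≤ ∑ i ∈ Finset.range (N + 1), coeff i f * V ^ i := by
      refine Finset.sum_le_sum fun i _ => ?_
      exact mul_le_mul_of_nonneg_left (psum_pow_le hgnn hy N hVle hV0 i) (hf_nonneg hf i)
    have step3 : ∑ i ∈ Finset.range (N + 1), coeff i f * V ^ i ≤ Freal r V := by
      have split : ∀ i ∈ Finset.range (N + 1), coeff i f * V ^ i
          = (if i = 1 then V else 0) + (if r + 1 ≤ i then V ^ i else 0) := by
        intro i _
        rw [hf i]
        rcases eq_or_ne i 1 with h | h
        · subst h
          rw [if_pos rfl, if_pos rfl, if_neg (by omega), pow_one]; ring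
        · rw [if_neg h, if_neg h]
          split <;> simp
      rw [Finset.sum_congr rfl split, Finset.sum_add_distrib]
      have e1 : ∑ i ∈ Finset.range (N + 1), (if i = 1 then V else 0) ≤ V := by
        rw [Finset.sum_ite_eq' (Finset.range (N + 1)) 1 (fun _ => V)]
        split
        · exact le_rfl
        · exact hV0
      have e2 : ∑ i ∈ Finset.range (N + 1), (if r + 1 ≤ i then V ^ i else 0)
          ≤ V ^ (r + 1) / (1 - V) := by
        rw [Finset.sum_ite, Finset.sum_const_zero, add_zero]
        have hfilter : Finset.filter (fun i => r + 1 ≤ i) (Finset.range (N + 1))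
            = Finset.Ico (r + 1) (N + 1) := by
          ext i; simp [Finset.mem_filter, Finset.mem_range, Finset.mem_Ico]; omega
        rw [hfilter, Finset.sum_Ico_eq_sum_range]
        have : ∀ j ∈ Finset.range (N + 1 - (r + 1)), V ^ (r + 1 + j) = V ^ (r+1) * V ^ j :=
          fun j _ => pow_add V (r+1) j
        rw [Finset.sum_congr rfl this, ← Finset.mul_sum]
        rw [div_eq_mul_one_div]
        exact mul_le_mul_of_nonneg_left (geom_aux hV0 hV1 _) (pow_nonneg hV0 _)
      calc _ ≤ V + V ^ (r + 1) / (1 - V) := add_le_add e1 e2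
        _ = Freal r V := rfl
    rw [Function.iterate_succ_apply', ← hV]
    exact le_trans step1 (le_trans step2 step3)
lemma Freal_ge {x : ℝ} (r : ℕ) (h0 : 0 ≤ x) (h1 : x < 1) : x ≤ Freal r x := by
  have : 0 ≤ x ^ (r + 1) / (1 - x) := div_nonneg (pow_nonneg h0 _) (by linarith)
  rw [Freal]; linarith

lemma iterA {r n : ℕ} (hr : 1 ≤ r) {y : ℝ} (hy : 0 < y)
    (hCy : (1 + 1/(r:ℝ)) * y ≤ 1 - 1/(r:ℝ))
    (hkey : (n:ℝ) * ((r:ℝ) * ((1 + 1/(r:ℝ)) * y) ^ (r + 1)) ≤ y / (r:ℝ)) :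
    ∀ m, m ≤ n → y ≤ (Freal r)^[m] y ∧
      (Freal r)^[m] y ≤ y + (m:ℝ) * ((r:ℝ) * ((1 + 1/(r:ℝ)) * y) ^ (r + 1)) := by
  have hrpos : (0:ℝ) < r := by exact_mod_cast hr
  have hrinv : (0:ℝ) < 1/(r:ℝ) := by positivity
  set C : ℝ := 1 + 1/(r:ℝ) with hC
  set E : ℝ := (r:ℝ) * (C * y) ^ (r + 1) with hE
  have hCy0 : 0 ≤ C * y := mul_nonneg (by positivity) hy.le
  have hE0 : 0 ≤ E := by positivity
  have hCy1 : C * y < 1 := by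
    rw [hC] at hCy ⊢; linarith
  have hCyeq : C * y = y + y / r := by rw [hC]; field_simp
  have hEdef : (C * y) ^ (r + 1) / (1 - C * y) ≤ E := by
    have hb : 1 / (r:ℝ) ≤ 1 - C * y := by rw [hC] at hCy ⊢; linarith
    have hp : 0 ≤ (C * y) ^ (r + 1) := pow_nonneg hCy0 _
    calc (C * y) ^ (r + 1) / (1 - C * y) ≤ (C * y) ^ (r + 1) / (1 / (r:ℝ)) :=
          div_le_div_of_nonneg_left hp (by positivity) hb
      _ = (r:ℝ) * (C * y) ^ (r + 1) := by field_simp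
  clear_value C E
  clear hCy hC hE
  have hEy : (n:ℝ) * E ≤ y / (r:ℝ) := hkey
  have hupper : ∀ m, m ≤ n → y + (m:ℝ) * E ≤ C * y := by
    intro m hm
    have h1 : (m:ℝ) * E ≤ (n:ℝ) * E :=
      mul_le_mul_of_nonneg_right (by exact_mod_cast hm) hE0
    have h2 : y / r ≤ y := by
      rw [div_le_iff₀ hrpos]
      have h1r : (1:ℝ) ≤ (r:ℝ) := by exact_mod_cast hr
      nlinarith
    linarith [hCyeq]
  intro m hm
  induction m with
  | zero => simp
  | succ m ih =>
    obtain ⟨hlow, hup⟩ := ih (by omega)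
    set u := (Freal r)^[m] y with hu
    have hu0 : 0 ≤ u := le_trans hy.le hlow
    have huC : u ≤ C * y := le_trans hup (hupper m (by omega))
    have hu1 : u < 1 := lt_of_le_of_lt huC hCy1
    rw [Function.iterate_succ_apply', ← hu]
    constructor
    · exact le_trans hlow (Freal_ge r hu0 hu1)
    · have hinc : Freal r u ≤ u + E := by
        rw [Freal]
        have h1 : u ^ (r + 1) / (1 - u) ≤ (C * y) ^ (r + 1) / (1 - C * y) := by
          refine div_le_div₀ (pow_nonneg hCy0 _)
            (pow_le_pow_left₀ hu0 huC _) (by linarith) (by linarith)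
        linarith
      have hcast : (((m:ℕ) + 1 : ℕ) : ℝ) * E = (m:ℝ) * E + E := by push_cast; ring
      rw [hcast]
      linarith
lemma Freal_mono {u v : ℝ} (r : ℕ) (h0 : 0 ≤ u) (huv : u ≤ v) (h1 : v < 1) :
    Freal r u ≤ Freal r v := by
  rw [Freal, Freal]
  have h2 : u ^ (r + 1) / (1 - u) ≤ v ^ (r + 1) / (1 - v) :=
    div_le_div₀ (pow_nonneg (le_trans h0 huv) _) (pow_le_pow_left₀ h0 huv _) (by linarith)
      (by linarith)
  linarith

lemma iterB {n : ℕ} {y : ℝ} (hy : 0 < y) (hny : (n:ℝ) * y ≤ 1/2) :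
    ∀ m, m ≤ n → 0 ≤ (Freal 1)^[m] y ∧ (Freal 1)^[m] y ≤ y / (1 - (m:ℝ) * y) := by
  intro m hm
  induction m with
  | zero => simpa using hy.le
  | succ m ih =>
    obtain ⟨hu0, hup⟩ := ih (by omega)
    set u := (Freal 1)^[m] y with hu
    have hmn : (m:ℝ) ≤ (n:ℝ) := by exact_mod_cast (by omega : m ≤ n)
    have hm1n : ((m:ℝ) + 1) ≤ (n:ℝ) := by exact_mod_cast (by omega : m + 1 ≤ n)
    have hden : 1/2 + y ≤ 1 - (m:ℝ) * y := by nlinarith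
    have hden' : 0 < 1 - (m:ℝ) * y := by linarith
    have hden2 : 0 < 1 - ((m:ℝ) + 1) * y := by nlinarith
    set v : ℝ := y / (1 - (m:ℝ) * y) with hv
    have hv0 : 0 < v := div_pos hy hden'
    have hv1 : v < 1 := by
      rw [hv, div_lt_one hden']; linarith
    have hFv : Freal 1 v = y / (1 - ((m:ℝ) + 1) * y) := by
      have hne1 : 1 - (m:ℝ) * y ≠ 0 := ne_of_gt hden'
      have hne2 : 1 - ((m:ℝ) + 1) * y ≠ 0 := ne_of_gt hden2
      have key : 1 - y / (1 - (m:ℝ) * y) = (1 - ((m:ℝ) + 1) * y) / (1 - (m:ℝ) * y) := by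
        rw [eq_div_iff hne1, sub_mul, div_mul_cancel₀ _ hne1]; ring
      rw [Freal, hv, key]
      rw [show 1 - ((m:ℝ) + 1) * y = (1 - (m:ℝ) * y) - y by ring] at hne2 ⊢
      generalize 1 - (m:ℝ) * y = D at hne1 hne2 ⊢
      rw [div_eq_mul_inv _ ((D - y) / D), inv_div]
      field_simp
      have hD : D ^ 2 * D⁻¹ ^ 2 = 1 := by rw [← mul_pow, mul_inv_cancel₀ hne1, one_pow]
      linear_combination y ^ 2 * hD
    rw [Function.iterate_succ_apply', ← hu]
    constructor
    · exact le_trans hu0 (Freal_ge 1 hu0 (lt_of_le_of_lt hup hv1))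
    · have := Freal_mono 1 hu0 hup hv1
      rw [hFv] at this
      convert this using 2
      push_cast; ring
lemma extract {g : PowerSeries ℝ} {y B : ℝ} (hg : ∀ j, 0 ≤ coeff j g)
    (hg1 : coeff 1 g = 1) (hy : 0 < y) {k : ℕ} (hk : 1 ≤ k)
    (hB : psum g y (k + 1) ≤ B) :
    coeff (k + 1) g * y ^ (k + 1) ≤ B - y := by
  have hsub : ({1, k + 1} : Finset ℕ) ⊆ Finset.range (k + 2) := by
    intro x hx
    simp only [Finset.mem_insert, Finset.mem_singleton] at hx
    rw [Finset.mem_range]; omega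
  have hpair : ∑ m ∈ ({1, k + 1} : Finset ℕ), coeff m g * y ^ m ≤ psum g y (k + 1) :=
    Finset.sum_le_sum_of_subset_of_nonneg hsub fun m _ _ =>
      mul_nonneg (hg m) (pow_nonneg hy.le m)
  rw [Finset.sum_pair (by omega : (1 : ℕ) ≠ k + 1), hg1, one_mul, pow_one] at hpair
  linarith

lemma NL1 {r : ℕ} (hr : 2 ≤ r) : (((r : ℝ) + 1) / ((r : ℝ) - 1)) ^ r ≤ 2 * (r : ℝ) ^ 3 := by
  rcases eq_or_lt_of_le hr with h | h
  · rw [← h]; norm_num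
  · have hr3 : 3 ≤ r := h
    have hR3 : (3:ℝ) ≤ (r:ℝ) := by exact_mod_cast hr3
    have hden : (0:ℝ) < (r:ℝ) - 1 := by linarith
    have heq : ((r : ℝ) + 1) / ((r : ℝ) - 1) = 1 + 2 / ((r:ℝ) - 1) := by
      field_simp
      ring
    have hx0 : (0:ℝ) ≤ 2 / ((r:ℝ) - 1) := by positivity
    have h1 : (1 + 2 / ((r:ℝ) - 1)) ^ r ≤ Real.exp (2 / ((r:ℝ) - 1)) ^ r := by
      refine pow_le_pow_left₀ (by linarith) ?_ r
      have := Real.add_one_le_exp (2 / ((r:ℝ) - 1))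
      linarith
    have h2 : Real.exp (2 / ((r:ℝ) - 1)) ^ r = Real.exp ((r:ℝ) * (2 / ((r:ℝ) - 1))) :=
      (Real.exp_nat_mul _ r).symm
    have h3 : (r:ℝ) * (2 / ((r:ℝ) - 1)) ≤ 3 := by
      rw [mul_div_assoc', div_le_iff₀ hden]
      nlinarith
    have h4 : Real.exp ((r:ℝ) * (2 / ((r:ℝ) - 1))) ≤ Real.exp 3 := Real.exp_le_exp.mpr h3
    have h5 : Real.exp 3 ≤ 20.1 := by
      have e1 : Real.exp 1 < 2.7182818286 := Real.exp_one_lt_d9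
      have : Real.exp 3 = Real.exp 1 ^ 3 := by
        rw [← Real.exp_nat_mul]; norm_num
      rw [this]
      calc Real.exp 1 ^ 3 ≤ 2.7182818286 ^ 3 :=
            pow_le_pow_left₀ (Real.exp_pos 1).le e1.le 3
        _ ≤ 20.1 := by norm_num
    have h6 : (20.1:ℝ) ≤ 2 * (r:ℝ) ^ 3 := by nlinarith [pow_le_pow_left₀ (by norm_num : (0:ℝ) ≤ 3) hR3 3]
    rw [heq]
    linarith
  
lemma NL2 {r : ℕ} (hr : 2 ≤ r) : (1 + 1 / (r : ℝ)) ^ (r + 1) ≤ 2 * (r : ℝ) := by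
  rcases eq_or_lt_of_le hr with h | h
  · rw [← h]; norm_num
  · have hr3 : 3 ≤ r := h
    have hR3 : (3:ℝ) ≤ (r:ℝ) := by exact_mod_cast hr3
    have hrpos : (0:ℝ) < (r:ℝ) := by linarith
    have hx0 : (0:ℝ) ≤ 1 / (r:ℝ) := by positivity
    have hx3 : 1 / (r:ℝ) ≤ 1 / 3 := by
      rw [div_le_div_iff₀ hrpos (by norm_num)]; linarith
    have h1 : (1 + 1 / (r:ℝ)) ^ r ≤ Real.exp (1 / (r:ℝ)) ^ r := by
      refine pow_le_pow_left₀ (by linarith) ?_ r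
      have := Real.add_one_le_exp (1 / (r:ℝ))
      linarith
    have h2 : Real.exp (1 / (r:ℝ)) ^ r = Real.exp ((r:ℝ) * (1 / (r:ℝ))) :=
      (Real.exp_nat_mul _ r).symm
    have h3 : (r:ℝ) * (1 / (r:ℝ)) = 1 := by field_simp
    have h4 : (1 + 1 / (r:ℝ)) ^ r ≤ Real.exp 1 := by rw [h2, h3] at h1; exact h1
    have h5 : Real.exp 1 < 2.7182818286 := Real.exp_one_lt_d9
    have h6 : (1 + 1 / (r:ℝ)) ^ (r + 1) = (1 + 1 / (r:ℝ)) * (1 + 1 / (r:ℝ)) ^ r := by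
      rw [pow_succ]; ring
    have h7 : 1 + 1 / (r:ℝ) ≤ 4 / 3 := by linarith
    have h8 : (0:ℝ) ≤ (1 + 1 / (r:ℝ)) ^ r := by positivity
    rw [h6]
    calc (1 + 1 / (r:ℝ)) * (1 + 1 / (r:ℝ)) ^ r ≤ (4/3) * 2.7182818286 := by
          refine mul_le_mul h7 (h4.trans h5.le) h8 (by norm_num)
      _ ≤ 2 * (r:ℝ) := by nlinarith

/-- for `f(z) = z + z^{r+1} + z^{r+2} + ⋯` (with `r ≥ 1`), writing
`fⁿ(z) = z + ∑_{k ≥ r} a_k z^{k+1}`, the coefficients `a_k` are nonnegative and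
satisfy `a_k ≤ (2 r³ n)^{k/r}` for all `k ≥ r`. -/
theorem stmt3 (r : ℕ) (hr : 1 ≤ r) (f : PowerSeries ℝ)
    (hf : ∀ k : ℕ, PowerSeries.coeff k f =
      if k = 1 then 1 else if r + 1 ≤ k then 1 else 0)
    (n : ℕ) (hn : 1 ≤ n) :
    ∀ k : ℕ, r ≤ k →
      0 ≤ PowerSeries.coeff (k + 1) (psIter f n) ∧
      PowerSeries.coeff (k + 1) (psIter f n) ≤
        ((2 * (r : ℝ) ^ 3 * n) : ℝ) ^ ((k : ℝ) / (r : ℝ)) := by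
  intro k hk
  have hnn := psIter_nonneg hf n
  refine ⟨hnn (k + 1), ?_⟩
  have hone := psIter_coeff_one hf hr n
  have hk1 : 1 ≤ k := le_trans hr hk
  have hnpos : (0:ℝ) < (n:ℝ) := by exact_mod_cast hn
  rcases eq_or_lt_of_le hr with hr1 | hr2
  · -- r = 1
    subst hr1
    set y : ℝ := (2 * (n:ℝ))⁻¹ with hydef
    have hy : 0 < y := by positivity
    have hny : (n:ℝ) * y = 1/2 := by
      rw [hydef]; field_simp
    have hiter := iterB hy (le_of_eq hny)
    have hinvar : ∀ m, m < n → 0 ≤ (Freal 1)^[m] y ∧ (Freal 1)^[m] y < 1 := by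
      intro m hm
      obtain ⟨h0, h1⟩ := hiter m hm.le
      refine ⟨h0, lt_of_le_of_lt h1 ?_⟩
      have hm1 : ((m:ℝ) + 1) * y ≤ (n:ℝ) * y := by
        have : ((m:ℝ) + 1) ≤ (n:ℝ) := by exact_mod_cast hm
        exact mul_le_mul_of_nonneg_right this hy.le
      rw [div_lt_one (by nlinarith)]
      nlinarith
    have hps := bridge hf le_rfl hy.le n hinvar (k + 1)
    have hitn : (Freal 1)^[n] y ≤ 2 * y := by
      have h2 := (hiter n le_rfl).2
      rw [hny] at h2
      calc (Freal 1)^[n] y ≤ y / (1 - 1/2) := h2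
        _ = 2 * y := by ring
    have hext := extract hnn hone hy hk1 (hps.trans hitn)
    have hb : coeff (k+1) (psIter f n) * y ^ (k+1) ≤ y := by linarith
    have hyk : (0:ℝ) < y ^ (k+1) := by positivity
    have ha : coeff (k+1) (psIter f n) ≤ y / y ^ (k+1) := by
      rw [le_div_iff₀ hyk]; exact hb
    have hyy : y / y ^ (k+1) = (2 * (n:ℝ)) ^ k := by
      rw [pow_succ, mul_comm, ← div_div, div_self (ne_of_gt hy), hydef, inv_pow, one_div,
        inv_inv]
    have hgoal : ((2:ℝ) * ((1:ℕ):ℝ) ^ 3 * (n:ℝ)) ^ ((k:ℝ) / ((1:ℕ):ℝ)) = (2 * (n:ℝ)) ^ k := by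
      push_cast
      rw [one_pow, mul_one, div_one, Real.rpow_natCast]
    rw [hgoal]
    rw [hyy] at ha
    exact ha
  · -- r ≥ 2
    have hr2' : 2 ≤ r := hr2
    have hRpos : (0:ℝ) < (r:ℝ) := by positivity
    have hR2 : (2:ℝ) ≤ (r:ℝ) := by exact_mod_cast hr2'
    set B0 : ℝ := 2 * (r:ℝ) ^ 3 * (n:ℝ) with hB0def
    have hB0 : 0 < B0 := by positivity
    set y : ℝ := B0 ^ (-(1/(r:ℝ))) with hydef
    have hy : 0 < y := Real.rpow_pos_of_pos hB0 _
    have hyr : y ^ r = B0⁻¹ := by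
      rw [hydef, ← Real.rpow_natCast (B0 ^ (-(1/(r:ℝ)))) r, ← Real.rpow_mul hB0.le]
      rw [show (-(1/(r:ℝ))) * ((r:ℕ):ℝ) = -1 by field_simp, Real.rpow_neg_one]
    set a : ℝ := ((r:ℝ) + 1) / ((r:ℝ) - 1) with hadef
    have ha0 : 0 < a := by
      rw [hadef]; apply div_pos <;> linarith
    have hkey1 : a ≤ (2 * (r:ℝ) ^ 3) ^ ((1:ℝ)/(r:ℝ)) := by
      have h1 : a ^ r ≤ 2 * (r:ℝ) ^ 3 := by rw [hadef]; exact NL1 hr2'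
      have key : (a ^ (r:ℕ)) ^ ((1:ℝ)/(r:ℝ)) = a := by
        rw [← Real.rpow_natCast a r, ← Real.rpow_mul ha0.le]
        rw [show ((r:ℕ):ℝ) * ((1:ℝ)/(r:ℝ)) = 1 by field_simp, Real.rpow_one]
      calc a = (a ^ (r:ℕ)) ^ ((1:ℝ)/(r:ℝ)) := key.symm
        _ ≤ (2 * (r:ℝ) ^ 3) ^ ((1:ℝ)/(r:ℝ)) :=
            Real.rpow_le_rpow (pow_nonneg ha0.le r) h1 (by positivity)
    have hy0 : y ≤ a⁻¹ := by
      have h2 : (2 * (r:ℝ)^3) ^ ((1:ℝ)/(r:ℝ)) ≤ B0 ^ ((1:ℝ)/(r:ℝ)) := by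
        refine Real.rpow_le_rpow (by positivity) ?_ (by positivity)
        rw [hB0def]
        have hn1 : (1:ℝ) ≤ (n:ℝ) := by exact_mod_cast hn
        have hr3 : (0:ℝ) < (r:ℝ)^3 := by positivity
        nlinarith
      have h3 : a ≤ B0 ^ ((1:ℝ)/(r:ℝ)) := le_trans hkey1 h2
      have h4 : (B0 ^ ((1:ℝ)/(r:ℝ)))⁻¹ ≤ a⁻¹ := inv_anti₀ ha0 h3
      have h5 : y = (B0 ^ ((1:ℝ)/(r:ℝ)))⁻¹ := by
        rw [hydef, ← Real.rpow_neg hB0.le, neg_div', neg_div]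
      rw [h5]; exact h4
    have hCyeq : (1 + 1/(r:ℝ)) * a⁻¹ = 1 - 1/(r:ℝ) := by
      rw [hadef, inv_div]
      field_simp
    have hCy : (1 + 1/(r:ℝ)) * y ≤ 1 - 1/(r:ℝ) := by
      calc (1 + 1/(r:ℝ)) * y ≤ (1 + 1/(r:ℝ)) * a⁻¹ :=
            mul_le_mul_of_nonneg_left hy0 (by positivity)
        _ = 1 - 1/(r:ℝ) := hCyeq
    have hCp : (1 + 1/(r:ℝ)) ^ (r+1) ≤ 2 * (r:ℝ) := NL2 hr2'
    have hkey : (n:ℝ) * ((r:ℝ) * ((1 + 1/(r:ℝ)) * y) ^ (r + 1)) ≤ y / (r:ℝ) := by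
      have e1 : ((1 + 1/(r:ℝ)) * y) ^ (r+1) = (1 + 1/(r:ℝ)) ^ (r+1) * (y ^ r * y) := by
        rw [mul_pow]; ring
      have e2 : ((1 + 1/(r:ℝ)) * y) ^ (r+1) ≤ (2 * (r:ℝ)) * (B0⁻¹ * y) := by
        rw [e1, hyr]
        refine mul_le_mul hCp le_rfl (by positivity) (by positivity)
      calc (n:ℝ) * ((r:ℝ) * ((1 + 1/(r:ℝ)) * y) ^ (r + 1))
          ≤ (n:ℝ) * ((r:ℝ) * ((2 * (r:ℝ)) * (B0⁻¹ * y))) := by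
            refine mul_le_mul_of_nonneg_left (mul_le_mul_of_nonneg_left e2 hRpos.le) hnpos.le
        _ = y / (r:ℝ) := by
            rw [hB0def]; field_simp
    have hiter := iterA hr hy hCy hkey
    have hE0 : 0 ≤ (r:ℝ) * ((1 + 1/(r:ℝ)) * y) ^ (r + 1) := by positivity
    have hCyy : (1 + 1/(r:ℝ)) * y = y + y / (r:ℝ) := by field_simp
    have hub : ∀ m, m ≤ n → (Freal r)^[m] y ≤ (1 + 1/(r:ℝ)) * y := by
      intro m hm
      have h1 := (hiter m hm).2
      have h2 : (m:ℝ) * ((r:ℝ) * ((1 + 1/(r:ℝ)) * y) ^ (r + 1))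
          ≤ (n:ℝ) * ((r:ℝ) * ((1 + 1/(r:ℝ)) * y) ^ (r + 1)) :=
        mul_le_mul_of_nonneg_right (by exact_mod_cast hm) hE0
      rw [hCyy]
      linarith
    have hinvar : ∀ m, m < n → 0 ≤ (Freal r)^[m] y ∧ (Freal r)^[m] y < 1 := by
      intro m hm
      refine ⟨hy.le.trans (hiter m hm.le).1, ?_⟩
      have h1 := hub m hm.le
      have hrinv : (0:ℝ) < 1/(r:ℝ) := by positivity
      linarith
    have hps := bridge hf hr hy.le n hinvar (k + 1)
    have hitn : (Freal r)^[n] y ≤ y + y / (r:ℝ) := by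
      have h1 := (hiter n le_rfl).2
      linarith
    have hext := extract hnn hone hy hk1 (hps.trans hitn)
    have hb : coeff (k+1) (psIter f n) * y ^ (k+1) ≤ y / (r:ℝ) := by linarith
    have hyk : (0:ℝ) < y ^ (k+1) := by positivity
    have ha : coeff (k+1) (psIter f n) ≤ (y / (r:ℝ)) / y ^ (k+1) := by
      rw [le_div_iff₀ hyk]; exact hb
    have hprod : y * (y ^ (k+1))⁻¹ = B0 ^ ((k:ℝ)/(r:ℝ)) := by
      have hyk1 : (y ^ (k+1) : ℝ) = B0 ^ ((-(1/(r:ℝ))) * ((k+1:ℕ):ℝ)) := by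
        rw [hydef, ← Real.rpow_natCast (B0 ^ (-(1/(r:ℝ)))) (k+1), ← Real.rpow_mul hB0.le]
      rw [hyk1, ← Real.rpow_neg hB0.le, hydef, ← Real.rpow_add hB0]
      congr 1
      push_cast
      field_simp
      ring
    have hsplit : (y / (r:ℝ)) / y ^ (k+1) = (y * (y ^ (k+1))⁻¹) / (r:ℝ) := by
      rw [div_div, mul_comm (r:ℝ) (y ^ (k+1)), ← div_div, div_eq_mul_inv y]
    rw [hsplit, hprod] at ha
    calc coeff (k+1) (psIter f n) ≤ B0 ^ ((k:ℝ)/(r:ℝ)) / (r:ℝ) := ha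
      _ ≤ B0 ^ ((k:ℝ)/(r:ℝ)) := by
          refine div_le_self (Real.rpow_nonneg hB0.le _) (by linarith)
end

section
/- Let r ≥ 2 be an integer, α ≥ 2r^3 a real number, and n ≥ 1 an integer with r^3/(αn) < ln 2. Then ((αn)^{1/r} + r^2/(αn)^{(r-1)/r})^r ≤ α(n+1). -/
/-!
Write `A = αn`. Since `A^{(r-1)/r} · A^{1/r} = A`, the left side equals `A (1 + r²/A)^r`, which is
at most `A e^{r³/A}`. On `[0, ln 2]` the convex function `exp` lies below its chord
`1 + y / ln 2 ≤ 1 + 2y`, so the left side is at most `A + 2r³ ≤ αn + α`.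
-/

open Real

namespace Real

lemma exp_le_one_add_div_log_two {y : ℝ} (hy₀ : 0 ≤ y) (hy : y ≤ log 2) :
    exp y ≤ 1 + y / log 2 := by
  have hlog : 0 < log 2 := log_pos one_lt_two
  have h := rpow_one_add_le_one_add_mul_self (s := 1) (by norm_num)
    (div_nonneg hy₀ hlog.le) ((div_le_one hlog).2 hy)
  rwa [one_add_one_eq_two, rpow_def_of_pos two_pos, mul_div_cancel₀ _ hlog.ne', mul_one] at h

lemma exp_le_one_add_two_mul {y : ℝ} (hy₀ : 0 ≤ y) (hy : y ≤ log 2) :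
    exp y ≤ 1 + 2 * y := by
  have : y / log 2 ≤ 2 * y := by
    rw [div_le_iff₀ (log_pos one_lt_two)]
    nlinarith [log_two_gt_d9]
  linarith [exp_le_one_add_div_log_two hy₀ hy]

lemma one_add_pow_le_exp_mul {x : ℝ} (hx : -1 ≤ x) (n : ℕ) : (1 + x) ^ n ≤ exp (n * x) := by
  rw [exp_nat_mul]
  exact pow_le_pow_left₀ (by linarith) (by linarith [add_one_le_exp x]) n

lemma rpow_one_div_add_div_rpow_sub_one_div {A : ℝ} (hA : 0 < A) {r : ℝ} (hr : r ≠ 0) (c : ℝ) :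
    A ^ (1 / r) + c / A ^ ((r - 1) / r) = A ^ (1 / r) * (1 + c / A) := by
  have hsplit : A ^ ((r - 1) / r) * A ^ (1 / r) = A := by
    rw [← rpow_add hA, ← add_div, sub_add_cancel, div_self hr, rpow_one]
  have : A ^ ((r - 1) / r) ≠ 0 := (rpow_pos_of_pos hA _).ne'
  field_simp
  linear_combination (-c) * hsplit

end Real

/-- for an integer `r ≥ 2`, a real `α ≥ 2r³` and an integer `n ≥ 1`
with `r³/(αn) < ln 2`, one has `((αn)^{1/r} + r²/(αn)^{(r-1)/r})^r ≤ α(n+1)`. -/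
theorem stmt11 (r : ℕ) (hr : 2 ≤ r) (α : ℝ) (hα : 2 * (r : ℝ) ^ 3 ≤ α)
    (n : ℕ) (hn : 1 ≤ n) (h : (r : ℝ) ^ 3 / (α * n) < Real.log 2) :
    ((α * n) ^ ((1 : ℝ) / r) + (r : ℝ) ^ 2 / (α * n) ^ (((r : ℝ) - 1) / r)) ^ (r : ℕ)
      ≤ α * (n + 1) := by
  have hr₀ : (0 : ℝ) < r := by exact_mod_cast (by omega : 0 < r)
  have hα₀ : 0 < α := lt_of_lt_of_le (by positivity) hα
  have hA : 0 < α * n := mul_pos hα₀ (by exact_mod_cast hn)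
  calc _ = α * n * (1 + (r : ℝ) ^ 2 / (α * n)) ^ r := by
        rw [rpow_one_div_add_div_rpow_sub_one_div hA hr₀.ne', mul_pow, one_div,
          rpow_inv_natCast_pow hA.le (by omega)]
    _ ≤ α * n * exp (r * ((r : ℝ) ^ 2 / (α * n))) := by
        gcongr
        exact one_add_pow_le_exp_mul (by linarith [show 0 ≤ (r : ℝ) ^ 2 / (α * n) by positivity]) r
    _ ≤ α * n * (1 + 2 * ((r : ℝ) ^ 3 / (α * n))) := by
        rw [← mul_div_assoc, ← pow_succ']
        gcongr
        exact exp_le_one_add_two_mul (by positivity) h.le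
    _ = α * n + 2 * (r : ℝ) ^ 3 := by field_simp
    _ ≤ α * (n + 1) := by linarith
end
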